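/- arXiv:1503.08195 — 12 statements merged into one kernel-verified Lean document; each statement's English description precedes it below -/
import Mathlib

section
/- Let g : ℝ → ℝ be left-continuous and non-decreasing, and let H be the Lebesgue–Stieltjes measure dH(θ) = dg(θ). Then for all x, y ∈ ℝ, (1(y < x) − α)·(g(x) − g(y)) = ∫ S^Q_{α,θ}(x,y) dH(θ), i.e., any consistent quantile scoring function of the form S(x,y) = (1(y<x)−α)(g(x)−g(y)) is a mixture of the elementary quantile scores. -/
open MeasureTheory

/-- Elementary quantile score `S^Q_{α,θ}(x,y)`. -/
noncomputable def SQ (α θ x y : ℝ) : ℝ :=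
  ((if y < x then (1:ℝ) else 0) - α) * ((if θ < x then (1:ℝ) else 0) - (if θ < y then (1:ℝ) else 0))

lemma step_sub_step_eq_indicator_Ico {a b : ℝ} (hab : a ≤ b) :
    (fun θ : ℝ => (if θ < b then (1:ℝ) else 0) - (if θ < a then (1:ℝ) else 0))
      = (Set.Ico a b).indicator 1 := by
  funext θ
  by_cases hθa : θ < a
  · simp [hθa, hθa.trans_le hab, not_le.mpr hθa]
  · by_cases hθb : θ < b <;> simp [hθa, hθb, not_lt.mp hθa]

lemma integral_step_sub_step {g : ℝ → ℝ} (hg : Monotone g) {H : Measure ℝ}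
    (hH : ∀ a b, a ≤ b → H (Set.Ico a b) = ENNReal.ofReal (g b - g a)) (a b : ℝ) :
    ∫ θ, ((if θ < b then (1:ℝ) else 0) - (if θ < a then (1:ℝ) else 0)) ∂H = g b - g a := by
  wlog hab : a ≤ b generalizing a b
  · have hba := this b a (le_of_not_ge hab)
    rw [← neg_sub (g a), ← hba, ← integral_neg]
    simp only [neg_sub]
  rw [step_sub_step_eq_indicator_Ico hab, integral_indicator_one measurableSet_Ico,
    measureReal_def, hH a b hab, ENNReal.toReal_ofReal (sub_nonneg.mpr (hg hab))]

theorem stmt2_general (α : ℝ) (g : ℝ → ℝ)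
    (hg_mono : Monotone g)
    (H : Measure ℝ)
    (hH : ∀ a b, a ≤ b → H (Set.Ico a b) = ENNReal.ofReal (g b - g a)) :
    ∀ x y : ℝ,
      ((if y < x then (1:ℝ) else 0) - α) * (g x - g y) = ∫ θ, SQ α θ x y ∂H := by
  intro x y
  rw [← integral_step_sub_step hg_mono hH y x, ← integral_const_mul]
  rfl

/-- Mixture representation of consistent quantile scoring functions:
if `g` is left-continuous and non-decreasing and `H` is the Lebesgue–Stieltjes
measure `dg` (i.e. `H [a,b) = g b − g a`), then
`(1(y<x) − α)(g x − g y) = ∫ S^Q_{α,θ}(x,y) dH(θ)`. -/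
theorem stmt2 (α : ℝ) (hα : α ∈ Set.Ioo (0:ℝ) 1) (g : ℝ → ℝ)
    (hg_mono : Monotone g)
    (hg_lc : ∀ x, ContinuousWithinAt g (Set.Iio x) x)
    (H : Measure ℝ)
    (hH : ∀ a b, a ≤ b → H (Set.Ico a b) = ENNReal.ofReal (g b - g a)) :
    ∀ x y : ℝ,
      ((if y < x then (1:ℝ) else 0) - α) * (g x - g y) = ∫ θ, SQ α θ x y ∂H :=
  stmt2_general α g hg_mono H hH
end

section
/- Let φ : ℝ → ℝ be convex with left-hand derivative φ', and let H be the Lebesgue–Stieltjes measure dH(θ) = dφ'(θ). Then for all x, y ∈ ℝ, the Bregman divergence φ(y) − φ(x) − φ'(x)(y−x) equals ∫ ((y−θ)₊ − (x−θ)₊ − (y−x)·1(θ < x)) dH(θ). In particular, for x < y, φ(y) − φ(x) − φ'(x)(y−x) = ∫_{[x,y)} (y − θ) dφ'(θ). -/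
/-!
By the layer-cake formula, `∫_{[a,b)} (b - θ) dH = ∫_a^b H[a,t) dt = ∫_a^b (φ'(t) - φ'(a)) dt`,
and the fundamental theorem of calculus for left derivatives turns this into
`φ(b) - φ(a) - φ'(a)(b - a)`. The integrand over the whole line is `(y - θ)·1_{[x,y)}` when
`x ≤ y` and `(θ - y)·1_{[y,x)}` when `y ≤ x`; writing `θ - y = (x - y) - (x - θ)` reduces the
second case to the first together with `H[y,x) = φ'(x) - φ'(y)`.
-/

open MeasureTheory Set

theorem intervalIntegral.integral_eq_sub_of_hasDeriv_left_of_le {E : Type*}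
    [NormedAddCommGroup E] [NormedSpace ℝ E] [CompleteSpace E] {f f' : ℝ → E} {a b : ℝ}
    (hab : a ≤ b) (hcont : ContinuousOn f (Icc a b))
    (hderiv : ∀ x ∈ Ioo a b, HasDerivWithinAt f (f' x) (Iio x) x)
    (f'int : IntervalIntegrable f' volume a b) : ∫ y in a..b, f' y = f b - f a := by
  -- reflect: `v ↦ -f (-v)` has right derivative `f' (-v)` on `[-b, -a]`
  have hcont' : ContinuousOn (fun v => -f (-v)) (Icc (-b) (-a)) :=
    (hcont.comp continuous_neg.continuousOn
      fun v hv => ⟨le_neg_of_le_neg hv.2, neg_le.mp hv.1⟩).neg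
  have hderiv' : ∀ v ∈ Ioo (-b) (-a),
      HasDerivWithinAt (fun v => -f (-v)) (f' (-v)) (Ioi v) v := by
    intro v hv
    have hf := hderiv (-v) ⟨lt_neg_of_lt_neg hv.2, neg_lt.mp hv.1⟩
    have hmaps : MapsTo (fun w : ℝ => -w) (Ioi v) (Iio (-v)) :=
      fun _ hw => neg_lt_neg (mem_Ioi.mp hw)
    convert (hf.scomp v (hasDerivAt_neg v).hasDerivWithinAt hmaps).neg using 1 <;>
      simp [Pi.neg_def]
  have hint' : IntervalIntegrable (fun v => f' (-v)) volume (-b) (-a) := by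
    simpa using (IntervalIntegrable.iff_comp_neg (by simp)).mp f'int.symm
  have key := integral_eq_sub_of_hasDeriv_right_of_le (neg_le_neg hab) hcont' hderiv' hint'
  rw [intervalIntegral.integral_comp_neg f'] at key
  simpa [neg_neg, sub_eq_add_neg, add_comm] using key

lemma integrableOn_sub_Ico (μ : Measure ℝ) {a b : ℝ} (hfin : μ (Ico a b) ≠ ⊤) :
    IntegrableOn (fun θ => b - θ) (Ico a b) μ := by
  refine Measure.integrableOn_of_bounded (M := b - a) hfin
    (continuous_const.sub continuous_id).aestronglyMeasurable ?_
  filter_upwards [ae_restrict_mem measurableSet_Ico] with θ hθ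
  rw [Real.norm_eq_abs, abs_le]
  constructor <;> linarith [hθ.1, hθ.2]

theorem setIntegral_Ico_sub_eq_integral_measureReal_Ico (μ : Measure ℝ) {a b : ℝ}
    (hfin : μ (Ico a b) ≠ ⊤) :
    ∫ θ in Ico a b, (b - θ) ∂μ = ∫ t in a..b, μ.real (Ico a t) := by
  rcases lt_or_ge b a with hba | hab
  · rw [Ico_eq_empty hba.not_gt, Measure.restrict_empty, integral_zero_measure,
      intervalIntegral.integral_symm, intervalIntegral.integral_congr (g := fun _ => 0),
      intervalIntegral.integral_zero, neg_zero]
    intro t ht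
    rw [uIcc_of_le hba.le] at ht
    simp [Ico_eq_empty_of_le ht.2]
  have hnonneg : 0 ≤ᵐ[μ.restrict (Ico a b)] fun θ => b - θ := by
    filter_upwards [ae_restrict_mem measurableSet_Ico] with θ hθ
    exact sub_nonneg.mpr hθ.2.le
  have hlevel : ∀ t ∈ Ioi (0 : ℝ),
      (μ.restrict (Ico a b)).real {θ | t < b - θ} = μ.real (Ico a (b - t)) := by
    intro t ht
    rw [measureReal_restrict_apply (measurableSet_lt measurable_const (by fun_prop))]
    congr 1
    ext θ
    simp only [mem_inter_iff, mem_ofPred_eq, mem_Ico]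
    constructor
    · rintro ⟨h, ha, -⟩; exact ⟨ha, by linarith⟩
    · rintro ⟨ha, h⟩; exact ⟨by linarith, ha, by linarith [mem_Ioi.mp ht]⟩
  have hvanish : ∀ t ∈ Ioi (0 : ℝ) \ Ioc 0 (b - a), μ.real (Ico a (b - t)) = 0 := by
    rintro t ⟨ht0, ht⟩
    rw [Ico_eq_empty fun h => ht ⟨ht0, by linarith⟩, measureReal_empty]
  rw [(integrableOn_sub_Ico μ hfin).integral_eq_integral_meas_lt hnonneg,
    setIntegral_congr_fun measurableSet_Ioi hlevel,
    setIntegral_eq_of_subset_of_forall_sdiff_eq_zero measurableSet_Ioi Ioc_subset_Ioi_self hvanish,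
    ← intervalIntegral.integral_of_le (sub_nonneg.mpr hab),
    intervalIntegral.integral_comp_sub_left (fun t => μ.real (Ico a t)), sub_sub_cancel, sub_zero]

lemma setIntegral_Ico_sub_left (μ : Measure ℝ) {a b : ℝ} (hfin : μ (Ico a b) ≠ ⊤) :
    ∫ θ in Ico a b, (θ - a) ∂μ = (b - a) * μ.real (Ico a b) - ∫ θ in Ico a b, (b - θ) ∂μ := by
  rw [mul_comm, ← smul_eq_mul, ← setIntegral_const,
    ← integral_sub (integrableOn_const (C := b - a) hfin) (integrableOn_sub_Ico μ hfin)]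
  congr 1 with θ
  ring

lemma hinge_sub_hinge_sub_mul_ite_eq_indicator_of_le {x y : ℝ} (hxy : x ≤ y) :
    (fun θ => max (y - θ) 0 - max (x - θ) 0 - (y - x) * (if θ < x then (1 : ℝ) else 0))
      = (Ico x y).indicator fun θ => y - θ := by
  ext θ
  simp only [indicator_apply, mem_Ico]
  grind

lemma hinge_sub_hinge_sub_mul_ite_eq_indicator_of_ge {x y : ℝ} (hyx : y ≤ x) :
    (fun θ => max (y - θ) 0 - max (x - θ) 0 - (y - x) * (if θ < x then (1 : ℝ) else 0))
      = (Ico y x).indicator fun θ => θ - y := by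
  ext θ
  simp only [indicator_apply, mem_Ico]
  grind

section

variable {φ φ' : ℝ → ℝ} {H : Measure ℝ}

lemma measureReal_Ico_of_ofReal_sub (hmono : Monotone φ')
    (hH : ∀ a b, a ≤ b → H (Ico a b) = ENNReal.ofReal (φ' b - φ' a)) {a b : ℝ} (hab : a ≤ b) :
    H.real (Ico a b) = φ' b - φ' a := by
  rw [measureReal_def, hH a b hab, ENNReal.toReal_ofReal (sub_nonneg.mpr (hmono hab))]

theorem sub_sub_mul_eq_setIntegral_Ico (hcont : Continuous φ)
    (hderiv : ∀ x, HasDerivWithinAt φ (φ' x) (Iio x) x) (hmono : Monotone φ')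
    (hH : ∀ a b, a ≤ b → H (Ico a b) = ENNReal.ofReal (φ' b - φ' a)) {a b : ℝ} (hab : a ≤ b) :
    φ b - φ a - φ' a * (b - a) = ∫ θ in Ico a b, (b - θ) ∂H := by
  have hint : IntervalIntegrable φ' volume a b := hmono.intervalIntegrable
  rw [setIntegral_Ico_sub_eq_integral_measureReal_Ico H (by simp [hH a b hab]),
    intervalIntegral.integral_congr (g := fun t => φ' t - φ' a)
      fun t ht => measureReal_Ico_of_ofReal_sub hmono hH (uIcc_of_le hab ▸ ht).1,
    intervalIntegral.integral_sub hint intervalIntegrable_const,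
    intervalIntegral.integral_eq_sub_of_hasDeriv_left_of_le hab hcont.continuousOn
      (fun x _ => hderiv x) hint,
    intervalIntegral.integral_const, smul_eq_mul, mul_comm]

end

theorem stmt3_general (φ φ' : ℝ → ℝ)
    (hφ : ConvexOn ℝ Set.univ φ)
    (hderiv : ∀ x, HasDerivWithinAt φ (φ' x) (Set.Iio x) x)
    (hmono : Monotone φ')
    (H : Measure ℝ)
    (hH : ∀ a b, a ≤ b → H (Set.Ico a b) = ENNReal.ofReal (φ' b - φ' a)) :
    (∀ x y : ℝ,
      φ y - φ x - φ' x * (y - x)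
        = ∫ θ, (max (y - θ) 0 - max (x - θ) 0 - (y - x) * (if θ < x then (1:ℝ) else 0)) ∂H) ∧
    (∀ x y : ℝ, x < y →
      φ y - φ x - φ' x * (y - x) = ∫ θ in Set.Ico x y, (y - θ) ∂H) := by
  have hcont : Continuous φ := continuousOn_univ.mp (hφ.continuousOn isOpen_univ)
  have hIco := fun {a b : ℝ} (hab : a ≤ b) =>
    sub_sub_mul_eq_setIntegral_Ico hcont hderiv hmono hH hab
  refine ⟨fun x y => ?_, fun x y hxy => hIco hxy.le⟩
  rcases le_total x y with hxy | hyx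
  · rw [hinge_sub_hinge_sub_mul_ite_eq_indicator_of_le hxy, integral_indicator measurableSet_Ico,
      hIco hxy]
  · rw [hinge_sub_hinge_sub_mul_ite_eq_indicator_of_ge hyx, integral_indicator measurableSet_Ico,
      setIntegral_Ico_sub_left H (by simp [hH y x hyx]), ← hIco hyx,
      measureReal_Ico_of_ofReal_sub hmono hH hyx]
    ring

/-- Bregman-type mixture representation: if `φ` is convex with left-hand derivative `φ'`
(non-decreasing, left-continuous) and `H` is the Lebesgue–Stieltjes measure `dφ'`, then
`φ(y) − φ(x) − φ'(x)(y−x) = ∫ ((y−θ)₊ − (x−θ)₊ − (y−x)·1(θ<x)) dH(θ)`,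
and for `x < y` this equals `∫_{[x,y)} (y − θ) dφ'(θ)`. -/
theorem stmt3 (φ φ' : ℝ → ℝ)
    (hφ : ConvexOn ℝ Set.univ φ)
    (hderiv : ∀ x, HasDerivWithinAt φ (φ' x) (Set.Iio x) x)
    (hmono : Monotone φ')
    (hlc : ∀ x, ContinuousWithinAt φ' (Set.Iio x) x)
    (H : Measure ℝ)
    (hH : ∀ a b, a ≤ b → H (Set.Ico a b) = ENNReal.ofReal (φ' b - φ' a)) :
    (∀ x y : ℝ,
      φ y - φ x - φ' x * (y - x)
        = ∫ θ, (max (y - θ) 0 - max (x - θ) 0 - (y - x) * (if θ < x then (1:ℝ) else 0)) ∂H) ∧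
    (∀ x y : ℝ, x < y →
      φ y - φ x - φ' x * (y - x) = ∫ θ in Set.Ico x y, (y - θ) ∂H) :=
  stmt3_general φ φ' hφ hderiv hmono H hH
end

section
/- For the exponential Bregman score S_a(x,y) = a^{-2}(exp(ay) − exp(ax)) − a^{-1}exp(ax)(y−x) with a ≠ 0, the mixing measure in the mixture representation over elementary scores S^E_{1/2,θ} (scaled so that S^E corresponds to α = 1/2 with the factor 2) has Lebesgue density h(θ) = exp(aθ): that is, for all x, y ∈ ℝ, S_a(x,y) = ∫_ℝ ((y−θ)₊ − (x−θ)₊ − (y−x)1(θ<x))·exp(aθ) dθ. -/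
/-!
`E_θ(x, y) = (y - θ) (1[x ≤ θ < y] - 1[y ≤ θ < x])`, so integrating it against `h` gives the
oriented integral `∫ θ in x..y, (y - θ) * h θ`. For `h = φ''` this is Taylor's formula with
integral remainder, `φ y - φ x - φ' x * (y - x)`, and the exponential Bregman score is the case
`φ θ = a⁻² exp (a θ)`, whose second derivative is `exp (a θ)`.
-/

open MeasureTheory Set

noncomputable def elementaryScore (θ x y : ℝ) : ℝ :=
  max (y - θ) 0 - max (x - θ) 0 - (y - x) * (if θ < x then 1 else 0)

lemma elementaryScore_mul_eq_indicator_sub_indicator (h : ℝ → ℝ) (θ x y : ℝ) :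
    elementaryScore θ x y * h θ
      = (Ico x y).indicator (fun t => (y - t) * h t) θ
        - (Ico y x).indicator (fun t => (y - t) * h t) θ := by
  simp only [elementaryScore, indicator, mem_Ico]
  split_ifs <;> grind

theorem integral_indicator_Ico_sub_indicator_Ico {μ : Measure ℝ} [NullSingletonClass μ]
    {f : ℝ → ℝ} {x y : ℝ} (hf : IntervalIntegrable f μ x y) :
    ∫ θ, ((Ico x y).indicator f θ - (Ico y x).indicator f θ) ∂μ = ∫ θ in x..y, f θ ∂μ := by
  have hxy : IntegrableOn f (Ico x y) μ := hf.1.congr_set_ae Ico_ae_eq_Ioc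
  have hyx : IntegrableOn f (Ico y x) μ := hf.2.congr_set_ae Ico_ae_eq_Ioc
  rw [integral_sub (hxy.integrable_indicator measurableSet_Ico)
      (hyx.integrable_indicator measurableSet_Ico),
    integral_indicator measurableSet_Ico, integral_indicator measurableSet_Ico,
    setIntegral_congr_set Ico_ae_eq_Ioc, setIntegral_congr_set Ico_ae_eq_Ioc]
  rfl

theorem integral_elementaryScore_mul {h : ℝ → ℝ} {x y : ℝ} (hh : IntervalIntegrable h volume x y) :
    ∫ θ, elementaryScore θ x y * h θ = ∫ θ in x..y, (y - θ) * h θ := by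
  simp_rw [elementaryScore_mul_eq_indicator_sub_indicator]
  exact integral_indicator_Ico_sub_indicator_Ico (hh.continuousOn_mul (by fun_prop))

theorem integral_sub_mul_eq_taylor_remainder {φ φ' φ'' : ℝ → ℝ} {x y : ℝ}
    (hφ : ∀ t, HasDerivAt φ (φ' t) t) (hφ' : ∀ t, HasDerivAt φ' (φ'' t) t)
    (hφ'' : IntervalIntegrable φ'' volume x y) :
    ∫ θ in x..y, (y - θ) * φ'' θ = φ y - φ x - φ' x * (y - x) := by
  have hderiv (t : ℝ) :
      HasDerivAt (fun θ => (y - θ) * φ' θ + φ θ) ((y - t) * φ'' t) t :=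
    ((((hasDerivAt_id' t).const_sub y).mul (hφ' t)).add (hφ t)).congr_deriv (by ring)
  have hint : IntervalIntegrable (fun θ => (y - θ) * φ'' θ) volume x y :=
    hφ''.continuousOn_mul (by fun_prop)
  rw [intervalIntegral.integral_eq_sub_of_hasDerivAt (fun t _ => hderiv t) hint]
  ring

/-- The exponential Bregman score `S_a` has mixing density `h(θ) = exp(aθ)` over the
elementary scores `E_θ(x,y) = (y−θ)₊ − (x−θ)₊ − (y−x)·1(θ<x)`. -/
theorem stmt5 (a : ℝ) (ha : a ≠ 0) (x y : ℝ) :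
    a⁻¹ ^ 2 * (Real.exp (a * y) - Real.exp (a * x)) - a⁻¹ * Real.exp (a * x) * (y - x)
      = ∫ θ : ℝ,
          (max (y - θ) 0 - max (x - θ) 0 - (y - x) * (if θ < x then (1:ℝ) else 0)) *
            Real.exp (a * θ) := by
  have hexp (c : ℝ) (t : ℝ) :
      HasDerivAt (fun θ => c * Real.exp (a * θ)) (c * a * Real.exp (a * t)) t :=
    ((((hasDerivAt_id' t).const_mul a).exp).const_mul c).congr_deriv (by ring)
  have hφ (t : ℝ) : HasDerivAt (fun θ => a⁻¹ ^ 2 * Real.exp (a * θ))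
      (a⁻¹ * Real.exp (a * t)) t :=
    (hexp _ t).congr_deriv (by field_simp)
  have hφ' (t : ℝ) : HasDerivAt (fun θ => a⁻¹ * Real.exp (a * θ)) (Real.exp (a * t)) t :=
    (hexp _ t).congr_deriv (by field_simp)
  change _ = ∫ θ, elementaryScore θ x y * Real.exp (a * θ)
  have hint : IntervalIntegrable (fun θ => Real.exp (a * θ)) volume x y := by
    apply Continuous.intervalIntegrable; fun_prop
  rw [integral_elementaryScore_mul hint, integral_sub_mul_eq_taylor_remainder hφ hφ' hint]
  ring
end

section
/- For Patton's homogeneous score on (0,∞), with b ∉ {0,1}: S_b(x,y) = (y^b − x^b)/(b(b−1)) − x^{b−1}(y−x)/(b−1), one has S_b(x,y) = ∫_0^∞ ((y−θ)₊ − (x−θ)₊ − (y−x)1(θ<x))·θ^{b−2} dθ for all x, y > 0. -/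
open MeasureTheory

lemma key_rpow_integral (b : ℝ) (hb0 : b ≠ 0) (hb1 : b ≠ 1) (u v : ℝ)
    (hu : 0 < u) (hv : 0 < v) :
    ∫ θ in u..v, (v - θ) * θ ^ (b - 2)
      = v * (v ^ (b - 1) - u ^ (b - 1)) / (b - 1) - (v ^ b - u ^ b) / b := by
  have h0 : (0 : ℝ) ∉ Set.uIcc u v := Set.notMem_uIcc_of_lt hu hv
  have hcong : ∀ θ ∈ Set.uIcc u v,
      (v - θ) * θ ^ (b - 2) = v * θ ^ (b - 2) - θ ^ (b - 1) := by
    intro θ hθ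
    have hθ0 : 0 < θ := by
      rcases Set.mem_uIcc.mp hθ with h | h <;> linarith [h.1]
    rw [show b - 1 = b - 2 + 1 by ring, Real.rpow_add_one (ne_of_gt hθ0)]
    ring
  rw [intervalIntegral.integral_congr hcong]
  have hi2 : IntervalIntegrable (fun θ : ℝ => θ ^ (b - 2)) volume u v :=
    intervalIntegral.intervalIntegrable_rpow (Or.inr h0)
  have hi1 : IntervalIntegrable (fun θ : ℝ => θ ^ (b - 1)) volume u v :=
    intervalIntegral.intervalIntegrable_rpow (Or.inr h0)
  rw [intervalIntegral.integral_sub (hi2.const_mul v) hi1,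
    intervalIntegral.integral_const_mul,
    integral_rpow (Or.inr ⟨by intro h; apply hb1; linarith [sub_eq_iff_eq_add.mp h], h0⟩),
    integral_rpow (Or.inr ⟨by intro h; apply hb0; linarith [sub_eq_iff_eq_add.mp h], h0⟩)]
  rw [show b - 2 + 1 = b - 1 by ring, show b - 1 + 1 = b by ring]
  ring

/-- Patton's homogeneous score of degree `b` (with `b ∉ {0,1}`) on the positive half line
has mixing density `h(θ) = θ^{b−2}·1(θ>0)` over the elementary scores
`E_θ(x,y) = (y−θ)₊ − (x−θ)₊ − (y−x)·1(θ<x)`. -/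
theorem stmt6 (b : ℝ) (hb0 : b ≠ 0) (hb1 : b ≠ 1) (x y : ℝ) (hx : 0 < x) (hy : 0 < y) :
    (y ^ b - x ^ b) / (b * (b - 1)) - x ^ (b - 1) * (y - x) / (b - 1)
      = ∫ θ in Set.Ioi (0:ℝ),
          (max (y - θ) 0 - max (x - θ) 0 - (y - x) * (if θ < x then (1:ℝ) else 0)) *
            θ ^ (b - 2) := by
  set f : ℝ → ℝ := fun θ =>
    (max (y - θ) 0 - max (x - θ) 0 - (y - x) * (if θ < x then (1:ℝ) else 0)) * θ ^ (b - 2)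
    with hf
  set m := min x y with hm
  set M := max x y with hM
  -- Step 1: restrict the integral to Ico m M
  have hrestrict : ∫ θ in Set.Ioi (0:ℝ), f θ = ∫ θ in Set.Ico m M, f θ := by
    rw [← integral_indicator measurableSet_Ioi, ← integral_indicator measurableSet_Ico]
    congr 1
    ext θ
    by_cases h1 : θ ∈ Set.Ico m M
    · have h2 : θ ∈ Set.Ioi (0:ℝ) := lt_of_lt_of_le (lt_min hx hy) h1.1
      rw [Set.indicator_of_mem h1, Set.indicator_of_mem h2]
    · rw [Set.indicator_of_notMem h1]
      by_cases h2 : θ ∈ Set.Ioi (0:ℝ)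
      · rw [Set.indicator_of_mem h2]
        rw [Set.mem_Ico, not_and_or] at h1
        rcases h1 with h1 | h1
        · push_neg at h1
          have hθx : θ < x := lt_of_lt_of_le h1 (min_le_left _ _)
          have hθy : θ < y := lt_of_lt_of_le h1 (min_le_right _ _)
          simp only [hf, if_pos hθx]
          rw [max_eq_left (by linarith), max_eq_left (by linarith)]
          ring
        · push_neg at h1
          have hθx : x ≤ θ := le_trans (le_max_left _ _) h1
          have hθy : y ≤ θ := le_trans (le_max_right _ _) h1
          simp only [hf, if_neg (not_lt.mpr hθx)]
          rw [max_eq_right (by linarith), max_eq_right (by linarith)]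
          ring
      · rw [Set.indicator_of_notMem h2]
  rw [hrestrict]
  -- Step 2: identify the integral on the interval
  have hkey : ∫ θ in Set.Ico m M, f θ
      = y * (y ^ (b - 1) - x ^ (b - 1)) / (b - 1) - (y ^ b - x ^ b) / b := by
    rcases le_or_gt x y with hxy | hxy
    · -- m = x, M = y
      have hm' : m = x := min_eq_left hxy
      have hM' : M = y := max_eq_right hxy
      rw [hm', hM', integral_Ico_eq_integral_Ioo, ← integral_Ioc_eq_integral_Ioo,
        ← intervalIntegral.integral_of_le hxy]
      rw [← key_rpow_integral b hb0 hb1 x y hx hy]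
      apply intervalIntegral.integral_congr
      intro θ hθ
      rw [Set.uIcc_of_le hxy] at hθ
      obtain ⟨hθ1, hθ2⟩ := hθ
      simp only [hf, if_neg (not_lt.mpr hθ1)]
      rw [max_eq_left (by linarith), max_eq_right (by linarith)]
      ring
    · -- m = y, M = x
      have hm' : m = y := min_eq_right hxy.le
      have hM' : M = x := max_eq_left hxy.le
      have hstep : ∫ θ in Set.Ico m M, f θ = ∫ θ in y..x, (θ - y) * θ ^ (b - 2) := by
        rw [hm', hM', integral_Ico_eq_integral_Ioo,
          intervalIntegral.integral_of_le hxy.le, integral_Ioc_eq_integral_Ioo]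
        apply setIntegral_congr_fun measurableSet_Ioo
        intro θ hθ
        obtain ⟨hθ1, hθ2⟩ := hθ
        simp only [hf, if_pos hθ2]
        rw [max_eq_right (by linarith), max_eq_left (by linarith)]
        ring
      rw [hstep]
      have hswap : ∫ θ in y..x, (θ - y) * θ ^ (b - 2)
          = ∫ θ in x..y, (y - θ) * θ ^ (b - 2) := by
        rw [intervalIntegral.integral_symm, ← intervalIntegral.integral_neg]
        congr 1
        ext θ
        ring
      rw [hswap, key_rpow_integral b hb0 hb1 x y hx hy]
  rw [hkey]
  -- Step 3: algebra
  have hx' : x ^ (b - 1) = x ^ b / x := Real.rpow_sub_one (ne_of_gt hx) b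
  have hy' : y ^ (b - 1) = y ^ b / y := Real.rpow_sub_one (ne_of_gt hy) b
  rw [hx', hy']
  have hb1' : b - 1 ≠ 0 := sub_ne_zero.mpr hb1
  field_simp
  ring
end

section
/- For every α ∈ (0,1) and θ ∈ ℝ, the elementary quantile scoring function S^Q_{α,θ} is an extreme point of the convex class S^Q_{α,1}: if S^Q_{α,θ} = (S₁ + S₂)/2 with S_j(x,y) = (1(y<x)−α)(g_j(x)−g_j(y)) where g_j is left-continuous non-decreasing with limits 0 at −∞ and 1 at +∞ (j = 1,2), then g₁(x) − g₁(y) = g₂(x) − g₂(y) = 1(θ<x) − 1(θ<y) for all x, y, hence S₁ = S₂ = S^Q_{α,θ}. -/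
open Filter

/-- `S^Q_{α,θ}` is an extreme point of the class `S^Q_{α,1}`: if it is the average of two
members `S₁, S₂` generated by left-continuous non-decreasing `g₁, g₂` with limits 0 at −∞
and 1 at +∞, then `gⱼ(x) − gⱼ(y) = 1(θ<x) − 1(θ<y)` for all `x, y`, and hence
`S₁ = S₂ = S^Q_{α,θ}`. -/
theorem stmt7 (α : ℝ) (hα : α ∈ Set.Ioo (0:ℝ) 1) (θ : ℝ)
    (g₁ g₂ : ℝ → ℝ)
    (h₁mono : Monotone g₁) (h₂mono : Monotone g₂)
    (h₁lc : ∀ x, ContinuousWithinAt g₁ (Set.Iio x) x)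
    (h₂lc : ∀ x, ContinuousWithinAt g₂ (Set.Iio x) x)
    (h₁bot : Tendsto g₁ atBot (nhds 0)) (h₁top : Tendsto g₁ atTop (nhds 1))
    (h₂bot : Tendsto g₂ atBot (nhds 0)) (h₂top : Tendsto g₂ atTop (nhds 1))
    (S₁ S₂ : ℝ → ℝ → ℝ)
    (hS₁ : ∀ x y, S₁ x y = ((if y < x then (1:ℝ) else 0) - α) * (g₁ x - g₁ y))
    (hS₂ : ∀ x y, S₂ x y = ((if y < x then (1:ℝ) else 0) - α) * (g₂ x - g₂ y))
    (havg : ∀ x y, SQ α θ x y = (S₁ x y + S₂ x y) / 2) :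
    (∀ x y : ℝ,
      g₁ x - g₁ y = (if θ < x then (1:ℝ) else 0) - (if θ < y then (1:ℝ) else 0) ∧
      g₂ x - g₂ y = (if θ < x then (1:ℝ) else 0) - (if θ < y then (1:ℝ) else 0)) ∧
    (∀ x y : ℝ, S₁ x y = SQ α θ x y ∧ S₂ x y = SQ α θ x y) := by
  obtain ⟨hα0, hα1⟩ := hα
  set h : ℝ → ℝ := fun x => if θ < x then (1:ℝ) else 0 with hh
  -- key cancellation
  have key : ∀ x y : ℝ, g₁ x - g₁ y + (g₂ x - g₂ y) = 2 * (h x - h y) := by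
    intro x y
    have hne : ((if y < x then (1:ℝ) else 0) - α) ≠ 0 := by
      by_cases hc : y < x <;> simp [hc] <;> [linarith; linarith]
    have := havg x y
    rw [hS₁, hS₂, SQ] at this
    apply mul_left_cancel₀ hne
    simp only [hh]
    ring_nf
    ring_nf at this
    linarith
  -- h limits
  have hbot : Tendsto h atBot (nhds 0) := by
    have : (fun x : ℝ => (0:ℝ)) =ᶠ[atBot] h := by
      filter_upwards [eventually_le_atBot θ] with x hx
      simp [hh, not_lt.mpr hx]
    exact Tendsto.congr' this tendsto_const_nhds
  -- sum identity
  have hsum : ∀ x : ℝ, g₁ x + g₂ x = 2 * h x := by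
    intro x
    have hF : Tendsto (fun y => g₁ y + g₂ y - 2 * h y) atBot (nhds 0) := by
      have h0 : (0:ℝ) = 0 + 0 - 2 * 0 := by norm_num
      rw [h0]
      exact (h₁bot.add h₂bot).sub (hbot.const_mul 2)
    have hconst : Tendsto (fun y => g₁ y + g₂ y - 2 * h y) atBot
        (nhds (g₁ x + g₂ x - 2 * h x)) := by
      have : (fun y => g₁ y + g₂ y - 2 * h y) = fun _ => g₁ x + g₂ x - 2 * h x := by
        funext y
        have := key x y
        linarith
      rw [this]; exact tendsto_const_nhds
    have := tendsto_nhds_unique hconst hF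
    linarith
  -- bounds
  have hge1 : ∀ x, 0 ≤ g₁ x := fun x =>
    le_of_tendsto h₁bot (eventually_atBot.mpr ⟨x, fun y hy => h₁mono hy⟩)
  have hge2 : ∀ x, 0 ≤ g₂ x := fun x =>
    le_of_tendsto h₂bot (eventually_atBot.mpr ⟨x, fun y hy => h₂mono hy⟩)
  have hle1 : ∀ x, g₁ x ≤ 1 := fun x =>
    ge_of_tendsto h₁top (eventually_atTop.mpr ⟨x, fun y hy => h₁mono hy⟩)
  have hle2 : ∀ x, g₂ x ≤ 1 := fun x =>
    ge_of_tendsto h₂top (eventually_atTop.mpr ⟨x, fun y hy => h₂mono hy⟩)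
  have hg1 : ∀ x, g₁ x = h x := by
    intro x
    have := hsum x
    by_cases hx : θ < x
    · simp only [hh, if_pos hx] at this ⊢
      have := hle2 x; have := hle1 x
      linarith [hsum x]
    · simp only [hh, if_neg hx] at this ⊢
      have := hge2 x; have := hge1 x
      linarith
  have hg2 : ∀ x, g₂ x = h x := by
    intro x
    have := hsum x
    rw [hg1 x] at this
    linarith
  constructor
  · intro x y
    constructor <;> simp only [hg1, hg2, hh]
  · intro x y
    constructor
    · rw [hS₁, SQ, hg1, hg1]
    · rw [hS₂, SQ, hg2, hg2]
end

section
/- For every α ∈ (0,1) and θ ∈ ℝ, the elementary expectile scoring function S^E_{α,θ} is an extreme point of the convex class S^E_{α,1}: if S^E_{α,θ} = (S₁ + S₂)/2 with S_j generated by convex φ_j with φ_j(0) = 0 and left-derivative φ_j' left-continuous non-decreasing with limits 0 at −∞ and 1 at +∞, then S₁ = S₂ = S^E_{α,θ}. -/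
open Filter

lemma left_slope_le {φ : ℝ → ℝ} (hconv : ConvexOn ℝ Set.univ φ) {x d : ℝ}
    (hd : HasDerivWithinAt φ d (Set.Iio x) x) {u : ℝ} (hu : u < x) :
    (φ u - φ x) / (u - x) ≤ d := by
  rw [hasDerivWithinAt_iff_tendsto_slope,
    Set.diff_singleton_eq_self (by simp : x ∉ Set.Iio x)] at hd
  refine ge_of_tendsto hd ?_
  filter_upwards [self_mem_nhdsWithin,
    eventually_nhdsWithin_of_eventually_nhds (eventually_gt_nhds hu)] with v hv huv
  have hvx : v < x := hv
  have := hconv.secant_mono (a := x) (Set.mem_univ _) (Set.mem_univ _) (Set.mem_univ _)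
    hu.ne hvx.ne huv.le
  simpa [slope_def_field] using this

lemma le_left_slope {φ : ℝ → ℝ} (hconv : ConvexOn ℝ Set.univ φ) {x d : ℝ}
    (hd : HasDerivWithinAt φ d (Set.Iio x) x) {v : ℝ} (hv : x < v) :
    d ≤ (φ v - φ x) / (v - x) := by
  rw [hasDerivWithinAt_iff_tendsto_slope,
    Set.diff_singleton_eq_self (by simp : x ∉ Set.Iio x)] at hd
  refine le_of_tendsto hd ?_
  filter_upwards [self_mem_nhdsWithin] with u hu
  have hux : u < x := hu
  have := hconv.secant_mono (a := x) (Set.mem_univ _) (Set.mem_univ _) (Set.mem_univ _)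
    hux.ne hv.ne' (hux.trans hv).le
  simpa [slope_def_field] using this

lemma phi_eq {φ φ' : ℝ → ℝ} {θ : ℝ} (hconv : ConvexOn ℝ Set.univ φ)
    (hderiv : ∀ x, HasDerivWithinAt φ (φ' x) (Set.Iio x) x)
    (hind : ∀ x, φ' x = if θ < x then (1:ℝ) else 0) :
    ∀ t, φ t - φ θ = max (t - θ) 0 := by
  have hconst : ∀ t ≤ θ, φ t = φ θ := by
    intro t ht
    rcases eq_or_lt_of_le ht with rfl | ht
    · rfl
    · have h1 := left_slope_le hconv (hderiv θ) ht
      have h2 := le_left_slope hconv (hderiv t) ht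
      rw [hind θ, if_neg (lt_irrefl θ)] at h1
      rw [hind t, if_neg (not_lt.2 ht.le)] at h2
      have hne : t - θ ≠ 0 := by intro h; apply ht.ne; linarith
      have hne' : θ - t ≠ 0 := by intro h; apply ht.ne; linarith
      have e1 : (φ t - φ θ) / (t - θ) * (t - θ) = φ t - φ θ := div_mul_cancel₀ _ hne
      have e2 : (φ θ - φ t) / (θ - t) * (θ - t) = φ θ - φ t := div_mul_cancel₀ _ hne'
      have p1 : 0 ≤ (φ t - φ θ) / (t - θ) * (t - θ) :=
        mul_nonneg_of_nonpos_of_nonpos h1 (by linarith)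
      have p2 : 0 ≤ (φ θ - φ t) / (θ - t) * (θ - t) :=
        mul_nonneg h2 (by linarith)
      rw [e1] at p1; rw [e2] at p2; linarith
  intro t
  rcases le_or_gt t θ with ht | ht
  · rw [hconst t ht, max_eq_right (by linarith)]; ring
  · rw [max_eq_left (by linarith)]
    have hne : θ - t ≠ 0 := by intro h; apply ht.ne; linarith
    -- upper bound
    have h1 := left_slope_le hconv (hderiv t) ht
    rw [hind t, if_pos ht] at h1
    have e1 : (φ θ - φ t) / (θ - t) * (θ - t) = φ θ - φ t := div_mul_cancel₀ _ hne
    have p1 := mul_le_mul_of_nonpos_right h1 (by linarith : θ - t ≤ 0)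
    rw [e1] at p1
    -- lower bound
    have hlow : φ θ + (t - θ) ≤ φ t := by
      apply le_of_forall_pos_le_add
      intro ε hε
      set u := θ + min ε (t - θ) / 2 with hu
      have hmin : 0 < min ε (t - θ) := lt_min hε (by linarith)
      have hθu : θ < u := by simp only [hu]; linarith
      have hut : u < t := by
        have : min ε (t - θ) ≤ t - θ := min_le_right _ _
        simp only [hu]; linarith
      have hA := le_left_slope hconv (hderiv u) hut
      rw [hind u, if_pos hθu] at hA
      have hB := le_left_slope hconv (hderiv θ) hθu
      rw [hind θ, if_neg (lt_irrefl θ)] at hB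
      have eA : (φ t - φ u) / (t - u) * (t - u) = φ t - φ u := div_mul_cancel₀ _ (by linarith)
      have eB : (φ u - φ θ) / (u - θ) * (u - θ) = φ u - φ θ := div_mul_cancel₀ _ (by linarith)
      have pA := mul_le_mul_of_nonneg_right hA (by linarith : (0:ℝ) ≤ t - u)
      have pB := mul_le_mul_of_nonneg_right hB (by linarith : (0:ℝ) ≤ u - θ)
      rw [eA] at pA; rw [eB] at pB
      have : min ε (t - θ) ≤ ε := min_le_left _ _
      simp only [hu] at pA pB ⊢
      nlinarith
    linarith [p1]

/-- Elementary expectile score `S^E_{α,θ}(x,y)`. -/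
noncomputable def SE (α θ x y : ℝ) : ℝ :=
  |(if y < x then (1:ℝ) else 0) - α| *
    (max (y - θ) 0 - max (x - θ) 0 - (y - x) * (if θ < x then (1:ℝ) else 0))

/-- `S^E_{α,θ}` is an extreme point of the class `S^E_{α,1}`: if it is the average of two
members `S₁, S₂` generated by convex `φⱼ` with `φⱼ(0) = 0` and left-hand derivatives
`φⱼ'` that are non-decreasing, left-continuous, with limits 0 at −∞ and 1 at +∞, then
`S₁ = S₂ = S^E_{α,θ}`. -/
theorem stmt8 (α : ℝ) (hα : α ∈ Set.Ioo (0:ℝ) 1) (θ : ℝ)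
    (φ₁ φ₂ φ₁' φ₂' : ℝ → ℝ)
    (h₁conv : ConvexOn ℝ Set.univ φ₁) (h₂conv : ConvexOn ℝ Set.univ φ₂)
    (h₁zero : φ₁ 0 = 0) (h₂zero : φ₂ 0 = 0)
    (h₁deriv : ∀ x, HasDerivWithinAt φ₁ (φ₁' x) (Set.Iio x) x)
    (h₂deriv : ∀ x, HasDerivWithinAt φ₂ (φ₂' x) (Set.Iio x) x)
    (h₁mono : Monotone φ₁') (h₂mono : Monotone φ₂')
    (h₁lc : ∀ x, ContinuousWithinAt φ₁' (Set.Iio x) x)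
    (h₂lc : ∀ x, ContinuousWithinAt φ₂' (Set.Iio x) x)
    (h₁bot : Tendsto φ₁' atBot (nhds 0)) (h₁top : Tendsto φ₁' atTop (nhds 1))
    (h₂bot : Tendsto φ₂' atBot (nhds 0)) (h₂top : Tendsto φ₂' atTop (nhds 1))
    (S₁ S₂ : ℝ → ℝ → ℝ)
    (hS₁ : ∀ x y, S₁ x y =
      |(if y < x then (1:ℝ) else 0) - α| * (φ₁ y - φ₁ x - φ₁' x * (y - x)))
    (hS₂ : ∀ x y, S₂ x y =
      |(if y < x then (1:ℝ) else 0) - α| * (φ₂ y - φ₂ x - φ₂' x * (y - x)))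
    (havg : ∀ x y, SE α θ x y = (S₁ x y + S₂ x y) / 2) :
    ∀ x y : ℝ, S₁ x y = SE α θ x y ∧ S₂ x y = SE α θ x y := by
  obtain ⟨hα0, hα1⟩ := hα
  have hA : ∀ x y : ℝ, (0:ℝ) < |(if y < x then (1:ℝ) else 0) - α| := by
    intro x y
    rw [abs_pos, sub_ne_zero]
    split_ifs
    · exact ne_of_gt hα1
    · exact ne_of_lt hα0
  have E : ∀ x y : ℝ,
      (φ₁ y + φ₂ y) - (φ₁ x + φ₂ x) - (φ₁' x + φ₂' x) * (y - x)
        = 2 * (max (y - θ) 0 - max (x - θ) 0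
            - (y - x) * (if θ < x then (1:ℝ) else 0)) := by
    intro x y
    have h := havg x y
    rw [hS₁, hS₂, SE] at h
    have h2 : |(if y < x then (1:ℝ) else 0) - α| *
        ((φ₁ y + φ₂ y) - (φ₁ x + φ₂ x) - (φ₁' x + φ₂' x) * (y - x))
        = |(if y < x then (1:ℝ) else 0) - α| *
        (2 * (max (y - θ) 0 - max (x - θ) 0
            - (y - x) * (if θ < x then (1:ℝ) else 0))) := by
      linear_combination -2 * h
    exact mul_left_cancel₀ (ne_of_gt (hA x y)) h2
  have hΦ' : ∀ x : ℝ, φ₁' x + φ₂' x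
      = (φ₁' 0 + φ₂' 0 - 2 * (if θ < (0:ℝ) then (1:ℝ) else 0))
        + 2 * (if θ < x then (1:ℝ) else 0) := by
    intro x
    have e1 := E x (x + 1)
    have e2 := E 0 (x + 1)
    have e3 := E 0 x
    linear_combination e2 - e3 - e1
  have hend : (φ₁' 0 + φ₂' 0 - 2 * (if θ < (0:ℝ) then (1:ℝ) else 0)) = 0 := by
    have hb : Tendsto (fun x => φ₁' x + φ₂' x) atBot (nhds 0) := by
      simpa using h₁bot.add h₂bot
    have h4 : Tendsto (fun x => φ₁' x + φ₂' x) atBot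
        (nhds (φ₁' 0 + φ₂' 0 - 2 * (if θ < (0:ℝ) then (1:ℝ) else 0))) := by
      refine Tendsto.congr' ?_ tendsto_const_nhds
      filter_upwards [eventually_le_atBot θ] with x hx
      rw [hΦ' x, if_neg (not_lt.2 hx)]; ring
    exact tendsto_nhds_unique h4 hb
  have hsum : ∀ x : ℝ, φ₁' x + φ₂' x = 2 * (if θ < x then (1:ℝ) else 0) := by
    intro x; have := hΦ' x; rw [hend] at this; linarith
  have h₁0 : ∀ x, 0 ≤ φ₁' x := fun x =>
    le_of_tendsto h₁bot ((eventually_le_atBot x).mono fun u hu => h₁mono hu)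
  have h₂0 : ∀ x, 0 ≤ φ₂' x := fun x =>
    le_of_tendsto h₂bot ((eventually_le_atBot x).mono fun u hu => h₂mono hu)
  have h₁1 : ∀ x, φ₁' x ≤ 1 := fun x =>
    ge_of_tendsto h₁top ((eventually_ge_atTop x).mono fun u hu => h₁mono hu)
  have h₂1 : ∀ x, φ₂' x ≤ 1 := fun x =>
    ge_of_tendsto h₂top ((eventually_ge_atTop x).mono fun u hu => h₂mono hu)
  have h₁ind : ∀ x, φ₁' x = if θ < x then (1:ℝ) else 0 := by
    intro x; have h := hsum x
    split_ifs at h ⊢ with hc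
    · linarith [h₁1 x, h₂1 x, h₁0 x, h₂0 x]
    · linarith [h₁1 x, h₂1 x, h₁0 x, h₂0 x]
  have h₂ind : ∀ x, φ₂' x = if θ < x then (1:ℝ) else 0 := by
    intro x; have h := hsum x
    split_ifs at h ⊢ with hc
    · linarith [h₁1 x, h₂1 x, h₁0 x, h₂0 x]
    · linarith [h₁1 x, h₂1 x, h₁0 x, h₂0 x]
  have hφ₁ := phi_eq h₁conv h₁deriv h₁ind
  have hφ₂ := phi_eq h₂conv h₂deriv h₂ind
  intro x y
  have key1 : S₁ x y = SE α θ x y := by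
    have hAB : φ₁ y - φ₁ x - φ₁' x * (y - x)
        = max (y - θ) 0 - max (x - θ) 0 - (y - x) * (if θ < x then (1:ℝ) else 0) := by
      linear_combination hφ₁ y - hφ₁ x - (y - x) * h₁ind x
    rw [hS₁, hAB, SE]
  refine ⟨key1, ?_⟩
  have h := havg x y
  linarith
end

section
/- For every α ∈ (0,1) and θ ∈ ℝ, the elementary quantile scoring function S^Q_{α,θ} is order sensitive for the α-quantile: for any probability measure F on ℝ, any α-quantile t of F, and x₂ ≤ x₁ ≤ t one has E_F[S^Q_{α,θ}(x₂,Y)] ≥ E_F[S^Q_{α,θ}(x₁,Y)], and for t ≤ x₁ ≤ x₂ one has E_F[S^Q_{α,θ}(x₁,Y)] ≤ E_F[S^Q_{α,θ}(x₂,Y)]. -/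
open MeasureTheory

/-!
For fixed `x`, the score `y ↦ S^Q_{α,θ}(x, y)` is `(1 - α) 1(y ≤ θ)` when `θ < x` and `α 1(θ < y)`
when `x ≤ θ`. Hence the expected score under `F` is `α (1 - F(θ)) + 1(θ < x) (F(θ) - α)`: it only
depends on the side of `θ` on which `x` lies, and crossing `θ` upwards changes it by `F(θ) - α`.
For forecasts below an α-quantile `t`, a crossing `θ < x ≤ t` forces `F(θ) ≤ F(t−) ≤ α`; above `t`,
a crossing `t ≤ x ≤ θ` forces `F(θ) ≥ F(t) ≥ α`. Either way moving towards `t` cannot increase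
the expected score.
-/

open Set

section ElementaryQuantileScore

variable {α θ x : ℝ}

lemma SQ_eq_indicator_Iic (hx : θ < x) : SQ α θ x = (Iic θ).indicator fun _ => 1 - α := by
  funext y
  by_cases hy : y ≤ θ
  · simp [SQ, hx, hy, hy.trans_lt hx, not_lt.mpr hy]
  · simp [SQ, hx, hy, lt_of_not_ge hy]

lemma SQ_eq_indicator_Ioi (hx : x ≤ θ) : SQ α θ x = (Ioi θ).indicator fun _ => α := by
  funext y
  by_cases hy : θ < y
  · simp [SQ, not_lt.mpr hx, hy, not_lt.mpr (hx.trans hy.le)]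
  · simp [SQ, not_lt.mpr hx, hy]

variable (F : Measure ℝ) [IsProbabilityMeasure F]

lemma integral_SQ :
    ∫ y, SQ α θ x y ∂F =
      α * (1 - F.real (Iic θ)) + if θ < x then F.real (Iic θ) - α else 0 := by
  have hcompl : F.real (Ioi θ) = 1 - F.real (Iic θ) := by
    rw [← compl_Iic, probReal_compl_eq_one_sub measurableSet_Iic]
  by_cases hx : θ < x
  · rw [SQ_eq_indicator_Iic hx, integral_indicator_const _ measurableSet_Iic, if_pos hx,
      smul_eq_mul]
    ring
  · rw [SQ_eq_indicator_Ioi (not_lt.mp hx), integral_indicator_const _ measurableSet_Ioi,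
      if_neg hx, smul_eq_mul, hcompl]
    ring

lemma integral_SQ_le_of_le {x₁ x₂ : ℝ} (hx : x₂ ≤ x₁) (hF : θ < x₁ → F.real (Iic θ) ≤ α) :
    ∫ y, SQ α θ x₁ y ∂F ≤ ∫ y, SQ α θ x₂ y ∂F := by
  rw [integral_SQ, integral_SQ]
  split_ifs with h₁ h₂ h₂
  · rfl
  · linarith [hF h₁]
  · exact absurd (h₂.trans_le hx) h₁
  · rfl

lemma integral_SQ_le_of_ge {x₁ x₂ : ℝ} (hx : x₁ ≤ x₂) (hF : x₁ ≤ θ → α ≤ F.real (Iic θ)) :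
    ∫ y, SQ α θ x₁ y ∂F ≤ ∫ y, SQ α θ x₂ y ∂F := by
  rw [integral_SQ, integral_SQ]
  split_ifs with h₁ h₂ h₂
  · rfl
  · exact absurd (h₁.trans_le hx) h₂
  · linarith [hF (not_lt.mp h₁)]
  · rfl

end ElementaryQuantileScore

theorem stmt9_general (α : ℝ) (θ : ℝ)
    (F : Measure ℝ) [IsProbabilityMeasure F] (t : ℝ)
    (ht : (F (Set.Iio t)).toReal ≤ α ∧ α ≤ (F (Set.Iic t)).toReal) :
    (∀ x₁ x₂ : ℝ, x₂ ≤ x₁ → x₁ ≤ t →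
      ∫ y, SQ α θ x₁ y ∂F ≤ ∫ y, SQ α θ x₂ y ∂F) ∧
    (∀ x₁ x₂ : ℝ, t ≤ x₁ → x₁ ≤ x₂ →
      ∫ y, SQ α θ x₁ y ∂F ≤ ∫ y, SQ α θ x₂ y ∂F) := by
  obtain ⟨hleft, hright⟩ := ht
  refine ⟨fun x₁ x₂ hx h₁t => integral_SQ_le_of_le F hx fun hθ => ?_,
    fun x₁ x₂ ht₁ hx => integral_SQ_le_of_ge F hx fun hθ => ?_⟩
  · calc F.real (Iic θ) ≤ F.real (Iio t) :=
          measureReal_mono (Iic_subset_Iio.mpr (hθ.trans_le h₁t))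
      _ ≤ α := hleft
  · calc α ≤ F.real (Iic t) := hright
      _ ≤ F.real (Iic θ) := measureReal_mono (Iic_subset_Iic.mpr (ht₁.trans hθ))

/-- Order sensitivity of the elementary quantile score: for any probability measure `F`,
any α-quantile `t` of `F` (i.e. `F(t−) ≤ α ≤ F(t)`), moving the point forecast toward `t`
does not increase the expected score. -/
theorem stmt9 (α : ℝ) (hα : α ∈ Set.Ioo (0:ℝ) 1) (θ : ℝ)
    (F : Measure ℝ) [IsProbabilityMeasure F] (t : ℝ)
    (ht : (F (Set.Iio t)).toReal ≤ α ∧ α ≤ (F (Set.Iic t)).toReal) :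
    (∀ x₁ x₂ : ℝ, x₂ ≤ x₁ → x₁ ≤ t →
      ∫ y, SQ α θ x₁ y ∂F ≤ ∫ y, SQ α θ x₂ y ∂F) ∧
    (∀ x₁ x₂ : ℝ, t ≤ x₁ → x₁ ≤ x₂ →
      ∫ y, SQ α θ x₁ y ∂F ≤ ∫ y, SQ α θ x₂ y ∂F) :=
  stmt9_general α θ F t ht
end

section
/- For every α ∈ (0,1) and θ ∈ ℝ, the elementary expectile scoring function S^E_{α,θ} is order sensitive for the α-expectile relative to distributions with finite first moment: if t is the α-expectile of F and x₂ ≤ x₁ ≤ t, then E_F[S^E_{α,θ}(x₂,Y)] ≥ E_F[S^E_{α,θ}(x₁,Y)], and symmetrically for t ≤ x₁ ≤ x₂. -/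
open MeasureTheory

lemma SE_of_le (α θ x y : ℝ) (hα : 0 ≤ α) (hx : x ≤ θ) :
    SE α θ x y = α * max (y - θ) 0 := by
  unfold SE
  rw [if_neg (not_lt.2 hx), max_eq_right (by linarith : x - θ ≤ 0)]
  by_cases h : y < x
  · rw [if_pos h, max_eq_right (by linarith : y - θ ≤ 0)]
    ring
  · rw [if_neg h]
    rw [show |(0:ℝ) - α| = α by rw [abs_of_nonpos (by linarith)]; ring]
    ring

lemma SE_of_gt (α θ x y : ℝ) (hα : α ≤ 1) (hx : θ < x) :
    SE α θ x y = (1 - α) * max (θ - y) 0 := by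
  unfold SE
  rw [if_pos hx, max_eq_left (by linarith : 0 ≤ x - θ)]
  by_cases h : y < x
  · rw [if_pos h, abs_of_nonneg (by linarith : 0 ≤ (1:ℝ) - α)]
    rcases le_or_gt y θ with hy | hy
    · rw [max_eq_right (by linarith : y - θ ≤ 0), max_eq_left (by linarith : 0 ≤ θ - y)]
      ring
    · rw [max_eq_left (by linarith : 0 ≤ y - θ), max_eq_right (by linarith : θ - y ≤ 0)]
      ring
  · rw [if_neg h]
    push_neg at h
    rw [max_eq_left (by linarith : 0 ≤ y - θ), max_eq_right (by linarith : θ - y ≤ 0)]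
    ring

/-- Order sensitivity of the elementary expectile score: for a probability measure `F`
with finite first moment and `t` the α-expectile of `F`, moving the point forecast toward
`t` does not increase the expected score. -/
theorem stmt10 (α : ℝ) (hα : α ∈ Set.Ioo (0:ℝ) 1) (θ : ℝ)
    (F : Measure ℝ) [IsProbabilityMeasure F]
    (hint : Integrable (fun y : ℝ => y) F) (t : ℝ)
    (ht : (1 - α) * ∫ y, max (t - y) 0 ∂F = α * ∫ y, max (y - t) 0 ∂F) :
    (∀ x₁ x₂ : ℝ, x₂ ≤ x₁ → x₁ ≤ t →
      ∫ y, SE α θ x₁ y ∂F ≤ ∫ y, SE α θ x₂ y ∂F) ∧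
    (∀ x₁ x₂ : ℝ, t ≤ x₁ → x₁ ≤ x₂ →
      ∫ y, SE α θ x₁ y ∂F ≤ ∫ y, SE α θ x₂ y ∂F) := by
  obtain ⟨hα0, hα1⟩ := hα
  -- integrability of the pos-parts
  have intL : ∀ s : ℝ, Integrable (fun y => max (s - y) 0) F := fun s =>
    ((integrable_const s).sub hint).pos_part
  have intR : ∀ s : ℝ, Integrable (fun y => max (y - s) 0) F := fun s =>
    (hint.sub (integrable_const s)).pos_part
  -- the two integral formulas
  have Ile : ∀ x, x ≤ θ → ∫ y, SE α θ x y ∂F = α * ∫ y, max (y - θ) 0 ∂F := by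
    intro x hx
    rw [show (fun y => SE α θ x y) = fun y => α * max (y - θ) 0 from
      funext fun y => SE_of_le α θ x y hα0.le hx, integral_const_mul]
  have Igt : ∀ x, θ < x → ∫ y, SE α θ x y ∂F = (1 - α) * ∫ y, max (θ - y) 0 ∂F := by
    intro x hx
    rw [show (fun y => SE α θ x y) = fun y => (1 - α) * max (θ - y) 0 from
      funext fun y => SE_of_gt α θ x y hα1.le hx, integral_const_mul]
  -- key inequality when θ ≤ t
  have key1 : θ ≤ t → (1 - α) * ∫ y, max (θ - y) 0 ∂F ≤ α * ∫ y, max (y - θ) 0 ∂F := by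
    intro hθt
    calc (1 - α) * ∫ y, max (θ - y) 0 ∂F
        ≤ (1 - α) * ∫ y, max (t - y) 0 ∂F := by
          apply mul_le_mul_of_nonneg_left _ (by linarith)
          exact integral_mono (intL θ) (intL t) fun y => max_le_max (by linarith) le_rfl
      _ = α * ∫ y, max (y - t) 0 ∂F := ht
      _ ≤ α * ∫ y, max (y - θ) 0 ∂F := by
          apply mul_le_mul_of_nonneg_left _ hα0.le
          exact integral_mono (intR t) (intR θ) fun y => max_le_max (by linarith) le_rfl
  have key2 : t ≤ θ → α * ∫ y, max (y - θ) 0 ∂F ≤ (1 - α) * ∫ y, max (θ - y) 0 ∂F := by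
    intro htθ
    calc α * ∫ y, max (y - θ) 0 ∂F
        ≤ α * ∫ y, max (y - t) 0 ∂F := by
          apply mul_le_mul_of_nonneg_left _ hα0.le
          exact integral_mono (intR θ) (intR t) fun y => max_le_max (by linarith) le_rfl
      _ = (1 - α) * ∫ y, max (t - y) 0 ∂F := ht.symm
      _ ≤ (1 - α) * ∫ y, max (θ - y) 0 ∂F := by
          apply mul_le_mul_of_nonneg_left _ (by linarith)
          exact integral_mono (intL t) (intL θ) fun y => max_le_max (by linarith) le_rfl
  constructor
  · intro x₁ x₂ h21 h1t
    by_cases h1 : x₁ ≤ θ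
    · rw [Ile x₁ h1, Ile x₂ (le_trans h21 h1)]
    · push_neg at h1
      rcases le_or_gt x₂ θ with h2 | h2
      · rw [Igt x₁ h1, Ile x₂ h2]
        exact key1 (by linarith)
      · rw [Igt x₁ h1, Igt x₂ h2]
  · intro x₁ x₂ ht1 h12
    by_cases h1 : x₁ ≤ θ
    · rcases le_or_gt x₂ θ with h2 | h2
      · rw [Ile x₁ h1, Ile x₂ h2]
      · rw [Ile x₁ h1, Igt x₂ h2]
        exact key2 (by linarith)
    · push_neg at h1
      rw [Igt x₁ h1, Igt x₂ (lt_of_lt_of_le h1 h12)]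
end

section
/- Expectiles are optimal investment thresholds under differential taxation: let κ_G, κ_L ∈ [0,1), set α = (1−κ_G)/(2−κ_G−κ_L), and let F have finite first moment. Then the expected payoff −(1−κ_L)∫_{(-∞,θ]}(θ−y)dF(y) + (1−κ_G)∫_{(θ,∞)}(y−θ)dF(y) is strictly positive if and only if the α-expectile of F exceeds θ. -/
open MeasureTheory

/-- Expectiles as optimal investment thresholds under differential taxation: with tax
rates `κ_G, κ_L ∈ [0,1)`, `α = (1−κ_G)/(2−κ_G−κ_L)`, and `t` the α-expectile of a
probability measure `F` with finite first moment, the expected payoff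
`−(1−κ_L)∫_{(-∞,θ]}(θ−y)dF + (1−κ_G)∫_{(θ,∞)}(y−θ)dF` is strictly positive iff `t > θ`. -/
theorem stmt13 (κG κL : ℝ) (hκG : κG ∈ Set.Ico (0:ℝ) 1) (hκL : κL ∈ Set.Ico (0:ℝ) 1)
    (α : ℝ) (hα : α = (1 - κG) / (2 - κG - κL))
    (F : Measure ℝ) [IsProbabilityMeasure F]
    (hint : Integrable (fun y : ℝ => y) F)
    (t : ℝ)
    (ht : (1 - α) * ∫ y, max (t - y) 0 ∂F = α * ∫ y, max (y - t) 0 ∂F)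
    (θ : ℝ) :
    0 < -(1 - κL) * (∫ y in Set.Iic θ, (θ - y) ∂F)
          + (1 - κG) * (∫ y in Set.Ioi θ, (y - θ) ∂F) ↔ θ < t := by
  obtain ⟨hG0, hG1⟩ := hκG
  obtain ⟨hL0, hL1⟩ := hκL
  have hcpos : (0:ℝ) < 2 - κG - κL := by linarith
  have hαpos : 0 < α := by rw [hα]; exact div_pos (by linarith) hcpos
  have h1α : 1 - α = (1 - κL) / (2 - κG - κL) := by
    rw [hα]; field_simp; ring
  have h1αpos : 0 < 1 - α := by rw [h1α]; exact div_pos (by linarith) hcpos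
  have hcα : (2 - κG - κL) * α = 1 - κG := by
    rw [hα]; field_simp
  have hc1α : (2 - κG - κL) * (1 - α) = 1 - κL := by
    rw [h1α]; field_simp
  -- integrability of the positive parts
  have hintL : ∀ s : ℝ, Integrable (fun y => max (s - y) 0) F := fun s =>
    ((integrable_const s).sub hint).pos_part
  have hintG : ∀ s : ℝ, Integrable (fun y => max (y - s) 0) F := fun s =>
    (hint.sub (integrable_const s)).pos_part
  -- set integrals equal full integrals of positive parts
  have eqL : ∀ s : ℝ, (∫ y in Set.Iic s, (s - y) ∂F) = ∫ y, max (s - y) 0 ∂F := by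
    intro s
    rw [← integral_add_compl (measurableSet_Iic : MeasurableSet (Set.Iic s)) (hintL s),
      Set.compl_Iic]
    have h1 : (∫ y in Set.Iic s, max (s - y) 0 ∂F) = ∫ y in Set.Iic s, (s - y) ∂F :=
      setIntegral_congr_fun measurableSet_Iic (fun y hy => max_eq_left (by
        simp only [Set.mem_Iic] at hy; linarith))
    have h2 : (∫ y in Set.Ioi s, max (s - y) 0 ∂F) = 0 := by
      rw [setIntegral_congr_fun (g := fun _ => (0:ℝ)) measurableSet_Ioi (fun y hy => max_eq_right (by
        simp only [Set.mem_Ioi] at hy; linarith))]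
      simp
    rw [h1, h2, add_zero]
  have eqG : ∀ s : ℝ, (∫ y in Set.Ioi s, (y - s) ∂F) = ∫ y, max (y - s) 0 ∂F := by
    intro s
    rw [← integral_add_compl (measurableSet_Ioi : MeasurableSet (Set.Ioi s)) (hintG s),
      Set.compl_Ioi]
    have h1 : (∫ y in Set.Ioi s, max (y - s) 0 ∂F) = ∫ y in Set.Ioi s, (y - s) ∂F :=
      setIntegral_congr_fun measurableSet_Ioi (fun y hy => max_eq_left (by
        simp only [Set.mem_Ioi] at hy; linarith))
    have h2 : (∫ y in Set.Iic s, max (y - s) 0 ∂F) = 0 := by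
      rw [setIntegral_congr_fun (g := fun _ => (0:ℝ)) measurableSet_Iic (fun y hy => max_eq_right (by
        simp only [Set.mem_Iic] at hy; linarith))]
      simp
    rw [h1, h2, add_zero]
  -- key identity : G s − L s = E[y] − s
  have key : ∀ s : ℝ, (∫ y, max (y - s) 0 ∂F) - (∫ y, max (s - y) 0 ∂F)
      = (∫ y, y ∂F) - s := by
    intro s
    rw [← integral_sub (hintG s) (hintL s)]
    have h : (fun y => max (y - s) 0 - max (s - y) 0) = fun y : ℝ => y - s := by
      funext y
      rcases le_total s y with h | h
      · rw [max_eq_left (by linarith), max_eq_right (by linarith)]; ring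
      · rw [max_eq_right (by linarith), max_eq_left (by linarith)]; ring
    rw [h, integral_sub hint (integrable_const s), integral_const]
    simp
  -- monotonicity
  have Lmono : ∀ a b : ℝ, a ≤ b → (∫ y, max (a - y) 0 ∂F) ≤ ∫ y, max (b - y) 0 ∂F :=
    fun a b hab => integral_mono (hintL a) (hintL b)
      (fun y => max_le_max (by linarith) le_rfl)
  have Gmono : ∀ a b : ℝ, a ≤ b → (∫ y, max (y - b) 0 ∂F) ≤ ∫ y, max (y - a) 0 ∂F :=
    fun a b hab => integral_mono (hintG b) (hintG a)
      (fun y => max_le_max (by linarith) le_rfl)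
  -- strict monotonicity of ψ s = α G s − (1−α) L s
  have ψstrict : ∀ a b : ℝ, a < b →
      α * (∫ y, max (y - b) 0 ∂F) - (1 - α) * (∫ y, max (b - y) 0 ∂F)
        < α * (∫ y, max (y - a) 0 ∂F) - (1 - α) * (∫ y, max (a - y) 0 ∂F) := by
    intro a b hab
    have hA : 0 ≤ (∫ y, max (y - a) 0 ∂F) - ∫ y, max (y - b) 0 ∂F :=
      sub_nonneg.2 (Gmono a b hab.le)
    have hB : 0 ≤ (∫ y, max (b - y) 0 ∂F) - ∫ y, max (a - y) 0 ∂F :=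
      sub_nonneg.2 (Lmono a b hab.le)
    have hAB : ((∫ y, max (y - a) 0 ∂F) - ∫ y, max (y - b) 0 ∂F)
        + ((∫ y, max (b - y) 0 ∂F) - ∫ y, max (a - y) 0 ∂F) = b - a := by
      have h1 := key a; have h2 := key b; linarith
    rcases eq_or_lt_of_le hA with hA0 | hA0
    · have hBpos : 0 < (∫ y, max (b - y) 0 ∂F) - ∫ y, max (a - y) 0 ∂F := by linarith
      nlinarith [mul_pos h1αpos hBpos]
    · nlinarith [mul_pos hαpos hA0, mul_nonneg h1αpos.le hB]
  have hψt : α * (∫ y, max (y - t) 0 ∂F) - (1 - α) * (∫ y, max (t - y) 0 ∂F) = 0 := by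
    linarith
  rw [eqL θ, eqG θ]
  have hpay : -(1 - κL) * (∫ y, max (θ - y) 0 ∂F) + (1 - κG) * (∫ y, max (y - θ) 0 ∂F)
      = (2 - κG - κL) * (α * (∫ y, max (y - θ) 0 ∂F)
          - (1 - α) * (∫ y, max (θ - y) 0 ∂F)) := by
    rw [← hcα, ← hc1α] ; ring
  rw [hpay]
  constructor
  · intro h
    have hψθ : 0 < α * (∫ y, max (y - θ) 0 ∂F) - (1 - α) * (∫ y, max (θ - y) 0 ∂F) := by
      nlinarith
    by_contra hcon
    push_neg at hcon
    rcases eq_or_lt_of_le hcon with heq | hlt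
    · rw [heq] at hψt; linarith
    · have := ψstrict t θ hlt; linarith
  · intro h
    have := ψstrict θ t h
    have : 0 < α * (∫ y, max (y - θ) 0 ∂F) - (1 - α) * (∫ y, max (θ - y) 0 ∂F) := by linarith
    nlinarith
end

section
/- The Brier score is a mixture of binary elementary scores with mixing measure twice Lebesgue on (0,1): for p ∈ [0,1] and y ∈ {0,1}, (p − y)² = 2∫_0^1 S^B_θ(p,y) dθ, where S^B_θ(p,y) = θ·1(y=0, p>θ) + (1−θ)·1(y=1, p≤θ). -/
open MeasureTheory

/-- The binary elementary (cost-loss) score at cost-loss ratio `θ`. -/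
noncomputable def SB (θ p y : ℝ) : ℝ :=
  if y = 0 ∧ θ < p then θ
  else if y = 1 ∧ p ≤ θ then 1 - θ
  else 0

/-- The Brier score is a mixture of binary elementary scores with mixing measure twice
Lebesgue on `(0,1)`: `(p − y)² = 2∫₀¹ S^B_θ(p,y) dθ`. -/
theorem stmt16 (p y : ℝ) (hp : p ∈ Set.Icc (0:ℝ) 1) (hy : y = 0 ∨ y = 1) :
    (p - y) ^ 2 = 2 * ∫ θ in Set.Ioo (0:ℝ) 1, SB θ p y := by
  obtain ⟨hp0, hp1⟩ := hp
  rcases hy with rfl | rfl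
  · have h1 : ∀ θ : ℝ, SB θ p 0 = (Set.Iio p).indicator id θ := by
      intro θ
      simp only [SB, Set.indicator, Set.mem_Iio]
      by_cases h : θ < p <;> simp [h]
    have h2 : (∫ θ in Set.Ioo (0:ℝ) 1, SB θ p 0)
        = ∫ θ in Set.Ioo (0:ℝ) 1 ∩ Set.Iio p, (θ : ℝ) := by
      simp_rw [h1]
      rw [setIntegral_indicator measurableSet_Iio]
      rfl
    have h3 : Set.Ioo (0:ℝ) 1 ∩ Set.Iio p = Set.Ioo 0 p := by
      ext x
      constructor
      · rintro ⟨⟨hx0, _⟩, hxp⟩; exact ⟨hx0, hxp⟩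
      · rintro ⟨hx0, hxp⟩; exact ⟨⟨hx0, lt_of_lt_of_le hxp hp1⟩, hxp⟩
    rw [h2, h3, ← integral_Ioc_eq_integral_Ioo, ← intervalIntegral.integral_of_le hp0]
    simp
    ring
  · have h1 : ∀ θ : ℝ, SB θ p 1 = (Set.Ici p).indicator (fun θ => 1 - θ) θ := by
      intro θ
      simp only [SB, Set.indicator, Set.mem_Ici]
      by_cases h : p ≤ θ <;> simp [h]
    have hae : (fun θ => SB θ p 1) =ᵐ[volume.restrict (Set.Ioo (0:ℝ) 1)]
        (Set.Ioi p).indicator (fun θ => 1 - θ) := by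
      refine (ae_restrict_iff' measurableSet_Ioo).2 ?_
      have : ({p} : Set ℝ)ᶜ ∈ ae (volume : Measure ℝ) := by
        simp [compl_mem_ae_iff]
      filter_upwards [this] with θ hθ _
      have hne : θ ≠ p := hθ
      rw [h1]
      simp only [Set.indicator, Set.mem_Ici, Set.mem_Ioi]
      by_cases h : p < θ
      · simp [h, le_of_lt h]
      · have : ¬ p ≤ θ := fun hle => h (lt_of_le_of_ne hle (Ne.symm hne))
        simp [h, this]
    have h2 : (∫ θ in Set.Ioo (0:ℝ) 1, SB θ p 1)
        = ∫ θ in Set.Ioo (0:ℝ) 1 ∩ Set.Ioi p, (1 - θ : ℝ) := by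
      rw [integral_congr_ae hae, setIntegral_indicator measurableSet_Ioi]
    have h3 : Set.Ioo (0:ℝ) 1 ∩ Set.Ioi p = Set.Ioo p 1 := by
      ext x
      constructor
      · rintro ⟨⟨_, hx1⟩, hxp⟩; exact ⟨hxp, hx1⟩
      · rintro ⟨hxp, hx1⟩; exact ⟨⟨lt_of_le_of_lt hp0 hxp, hx1⟩, hxp⟩
    rw [h2, h3, ← integral_Ioc_eq_integral_Ioo, ← intervalIntegral.integral_of_le hp1]
    have : (∫ x in p..1, (1 - x : ℝ)) = (1 - p) - (1 - p^2)/2 := by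
      rw [intervalIntegral.integral_sub intervalIntegrable_const
        (intervalIntegral.intervalIntegrable_id)]
      simp
    rw [this]
    ring
end

section
/- For empirical quantile forecasts, the average score difference θ ↦ (1/n)Σᵢ [S^Q_{α,θ}(x_{i1},y_i) − S^Q_{α,θ}(x_{i2},y_i)] is a right-continuous piecewise constant function of θ, each summand vanishing unless min(x_{i1},x_{i2}) ≤ θ < max(x_{i1},x_{i2}), and with jump points only at x_{i1}, x_{i2}, or y_i. Consequently, if the average score of forecast 1 is ≤ that of forecast 2 at every θ in the finite set {x_{11},x_{12},y_1,…,x_{n1},x_{n2},y_n}, then it is ≤ at every θ ∈ ℝ. -/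
/-!
Every score `θ ↦ S^Q_{α,θ}(x, y)` depends on `θ` only through the truth values of `θ < x` and
`θ < y`. Hence the average scores, and their difference, depend on `θ` only through the set of
data points `z` with `θ < z`. Such a function is constant on each interval `[z, z')` between
consecutive data points and below the smallest one, so it is right-continuous, locally constant
away from the data, and takes at each `θ` its value at the largest data point `≤ θ` if there is
one. Below all data points every score vanishes.
-/

open Finset

open Filter Topology

lemma SQ_congr {α θ θ' x y : ℝ} (hx : θ < x ↔ θ' < x) (hy : θ < y ↔ θ' < y) :
    SQ α θ x y = SQ α θ' x y := by
  unfold SQ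
  rw [if_congr hx rfl rfl, if_congr hy rfl rfl]

lemma SQ_eq_zero_of_lt_of_lt {α θ x y : ℝ} (hx : θ < x) (hy : θ < y) : SQ α θ x y = 0 := by
  simp [SQ, hx, hy]

lemma SQ_sub_SQ_eq_zero_of_notMem_Ico {α θ x₁ x₂ y : ℝ}
    (h : ¬(min x₁ x₂ ≤ θ ∧ θ < max x₁ x₂)) : SQ α θ x₁ y - SQ α θ x₂ y = 0 := by
  rw [not_and_or, not_le, not_lt, lt_min_iff, max_le_iff] at h
  unfold SQ
  rcases h with ⟨h₁, h₂⟩ | ⟨h₁, h₂⟩ <;> split_ifs <;> linarith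

lemma sum_SQ_congr {ι : Type*} (s : Finset ι) {α θ θ' : ℝ} {T : Set ℝ} {x y : ι → ℝ}
    (hx : ∀ i, x i ∈ T) (hy : ∀ i, y i ∈ T) (h : ∀ z ∈ T, θ < z ↔ θ' < z) :
    ∑ i ∈ s, SQ α θ (x i) (y i) = ∑ i ∈ s, SQ α θ' (x i) (y i) :=
  sum_congr rfl fun i _ => SQ_congr (h _ (hx i)) (h _ (hy i))

lemma eventually_lt_iff_nhdsGE (θ z : ℝ) : ∀ᶠ t in 𝓝[≥] θ, (θ < z ↔ t < z) := by
  rcases lt_or_ge θ z with hz | hz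
  · filter_upwards [nhdsWithin_le_nhds (Iio_mem_nhds hz)] with t ht
    exact iff_of_true hz ht
  · filter_upwards [self_mem_nhdsWithin] with t (ht : θ ≤ t)
    exact iff_of_false hz.not_gt (hz.trans ht).not_gt

lemma eventually_lt_iff_nhds {θ z : ℝ} (h : z ≠ θ) : ∀ᶠ t in 𝓝 θ, (θ < z ↔ t < z) := by
  rcases h.lt_or_gt with hz | hz
  · filter_upwards [Ioi_mem_nhds hz] with t (ht : z < t)
    exact iff_of_false hz.not_gt ht.not_gt
  · filter_upwards [Iio_mem_nhds hz] with t ht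
    exact iff_of_true hz ht

section CutInvariant

variable {β : Type*} {T : Set ℝ} {f : ℝ → β}
  (hT : T.Finite) (hf : ∀ ⦃t t'⦄, (∀ z ∈ T, t < z ↔ t' < z) → f t = f t')
include hT hf

lemma eventuallyEq_nhdsGE_of_lt_iff (θ : ℝ) : f =ᶠ[𝓝[≥] θ] fun _ => f θ := by
  filter_upwards [hT.eventually_all.2 fun z _ => eventually_lt_iff_nhdsGE θ z] with t ht
  exact (hf ht).symm

lemma eventuallyEq_nhds_of_lt_iff {θ : ℝ} (hθ : θ ∉ T) : f =ᶠ[𝓝 θ] fun _ => f θ := by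
  filter_upwards [hT.eventually_all.2 fun z hz => eventually_lt_iff_nhds (ne_of_mem_of_not_mem hz hθ)]
    with t ht
  exact (hf ht).symm

lemma exists_mem_eq_or_forall_lt_of_lt_iff (θ : ℝ) :
    (∃ z ∈ T, f θ = f z) ∨ ∀ z ∈ T, θ < z := by
  by_cases hne : (T ∩ Set.Iic θ).Nonempty
  · obtain ⟨z, ⟨hzT, hzθ⟩, hmax⟩ := Set.exists_max_image _ id (hT.inter_of_left _) hne
    refine .inl ⟨z, hzT, hf fun w hw => ⟨fun hθw => hzθ.trans_lt hθw, fun hzw => ?_⟩⟩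
    by_contra hwθ
    exact (hmax w ⟨hw, not_lt.1 hwθ⟩).not_gt hzw
  · exact .inr fun z hz => not_le.1 fun hzθ => hne ⟨z, hz, hzθ⟩

end CutInvariant

theorem stmt17_general (α : ℝ) (n : ℕ)
    (x1 x2 y : Fin n → ℝ) :
    (∀ θ : ℝ, ContinuousWithinAt
      (fun t : ℝ => (1 / (n : ℝ)) * ∑ i, (SQ α t (x1 i) (y i) - SQ α t (x2 i) (y i)))
      (Set.Ici θ) θ) ∧
    (∀ (i : Fin n) (θ : ℝ), ¬(min (x1 i) (x2 i) ≤ θ ∧ θ < max (x1 i) (x2 i)) →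
      SQ α θ (x1 i) (y i) - SQ α θ (x2 i) (y i) = 0) ∧
    (∀ θ : ℝ, (∀ i : Fin n, θ ≠ x1 i ∧ θ ≠ x2 i ∧ θ ≠ y i) →
      ∃ ε > 0, ∀ θ' ∈ Set.Ioo (θ - ε) (θ + ε),
        (1 / (n : ℝ)) * ∑ i, (SQ α θ' (x1 i) (y i) - SQ α θ' (x2 i) (y i))
          = (1 / (n : ℝ)) * ∑ i, (SQ α θ (x1 i) (y i) - SQ α θ (x2 i) (y i))) ∧
    ((∀ θ ∈ Set.range x1 ∪ Set.range x2 ∪ Set.range y,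
        (1 / (n : ℝ)) * ∑ i, SQ α θ (x1 i) (y i)
          ≤ (1 / (n : ℝ)) * ∑ i, SQ α θ (x2 i) (y i)) →
      ∀ θ : ℝ,
        (1 / (n : ℝ)) * ∑ i, SQ α θ (x1 i) (y i)
          ≤ (1 / (n : ℝ)) * ∑ i, SQ α θ (x2 i) (y i)) := by
  set T := Set.range x1 ∪ Set.range x2 ∪ Set.range y
  have hT : T.Finite := Set.toFinite T
  have hx1 (i) : x1 i ∈ T := .inl (.inl ⟨i, rfl⟩)
  have hx2 (i) : x2 i ∈ T := .inl (.inr ⟨i, rfl⟩)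
  have hy (i) : y i ∈ T := .inr ⟨i, rfl⟩
  have hdiff : ∀ ⦃t t'⦄, (∀ z ∈ T, t < z ↔ t' < z) →
      (1 / (n : ℝ)) * ∑ i, (SQ α t (x1 i) (y i) - SQ α t (x2 i) (y i))
        = (1 / (n : ℝ)) * ∑ i, (SQ α t' (x1 i) (y i) - SQ α t' (x2 i) (y i)) := fun t t' h => by
    simp only [sum_sub_distrib, sum_SQ_congr _ hx1 hy h, sum_SQ_congr _ hx2 hy h]
  refine ⟨fun θ => ?_, fun i θ => SQ_sub_SQ_eq_zero_of_notMem_Ico, fun θ hθ => ?_, fun hdom θ => ?_⟩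
  · exact continuousWithinAt_const.congr_of_eventuallyEq
      (eventuallyEq_nhdsGE_of_lt_iff hT hdiff θ) rfl
  · have hθT : θ ∉ T := by
      rintro ((⟨i, hi⟩ | ⟨i, hi⟩) | ⟨i, hi⟩)
      exacts [(hθ i).1 hi.symm, (hθ i).2.1 hi.symm, (hθ i).2.2 hi.symm]
    obtain ⟨ε, hε, h⟩ := Metric.eventually_nhds_iff_ball.1 (eventuallyEq_nhds_of_lt_iff hT hdiff hθT)
    exact ⟨ε, hε, fun θ' hθ' => h θ' (Real.ball_eq_Ioo θ ε ▸ hθ')⟩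
  · have hdom_congr : ∀ ⦃t t'⦄, (∀ z ∈ T, t < z ↔ t' < z) →
        ((1 / (n : ℝ)) * ∑ i, SQ α t (x1 i) (y i) ≤ (1 / (n : ℝ)) * ∑ i, SQ α t (x2 i) (y i))
          = ((1 / (n : ℝ)) * ∑ i, SQ α t' (x1 i) (y i)
            ≤ (1 / (n : ℝ)) * ∑ i, SQ α t' (x2 i) (y i)) := fun t t' h => by
      rw [sum_SQ_congr _ hx1 hy h, sum_SQ_congr _ hx2 hy h]
    rcases exists_mem_eq_or_forall_lt_of_lt_iff hT hdom_congr θ with ⟨z, hz, heq⟩ | hlt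
    · exact heq ▸ hdom z hz
    · simp [SQ_eq_zero_of_lt_of_lt (hlt _ (hx1 _)) (hlt _ (hy _)),
        SQ_eq_zero_of_lt_of_lt (hlt _ (hx2 _)) (hlt _ (hy _))]

/-- Structure of the empirical score difference for quantile forecasts: the average score
difference is right-continuous, each summand vanishes unless
`min(x_{i1},x_{i2}) ≤ θ < max(x_{i1},x_{i2})`, the difference is locally constant away
from the data points, and dominance need only be checked at the finitely many data
points `x_{i1}, x_{i2}, y_i`. -/
theorem stmt17 (α : ℝ) (hα : α ∈ Set.Ioo (0:ℝ) 1) (n : ℕ) (hn : 0 < n)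
    (x1 x2 y : Fin n → ℝ) :
    (∀ θ : ℝ, ContinuousWithinAt
      (fun t : ℝ => (1 / (n : ℝ)) * ∑ i, (SQ α t (x1 i) (y i) - SQ α t (x2 i) (y i)))
      (Set.Ici θ) θ) ∧
    (∀ (i : Fin n) (θ : ℝ), ¬(min (x1 i) (x2 i) ≤ θ ∧ θ < max (x1 i) (x2 i)) →
      SQ α θ (x1 i) (y i) - SQ α θ (x2 i) (y i) = 0) ∧
    (∀ θ : ℝ, (∀ i : Fin n, θ ≠ x1 i ∧ θ ≠ x2 i ∧ θ ≠ y i) →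
      ∃ ε > 0, ∀ θ' ∈ Set.Ioo (θ - ε) (θ + ε),
        (1 / (n : ℝ)) * ∑ i, (SQ α θ' (x1 i) (y i) - SQ α θ' (x2 i) (y i))
          = (1 / (n : ℝ)) * ∑ i, (SQ α θ (x1 i) (y i) - SQ α θ (x2 i) (y i))) ∧
    ((∀ θ ∈ Set.range x1 ∪ Set.range x2 ∪ Set.range y,
        (1 / (n : ℝ)) * ∑ i, SQ α θ (x1 i) (y i)
          ≤ (1 / (n : ℝ)) * ∑ i, SQ α θ (x2 i) (y i)) →
      ∀ θ : ℝ,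
        (1 / (n : ℝ)) * ∑ i, SQ α θ (x1 i) (y i)
          ≤ (1 / (n : ℝ)) * ∑ i, SQ α θ (x2 i) (y i)) :=
  stmt17_general α n x1 x2 y
end

section
/- The CRPS admits the double mixture representation: for any CDF F with unique quantiles and any y ∈ ℝ, ∫_ℝ (F(θ) − 1(θ ≥ y))² dθ = 2∫_ℝ∫_0^1 S^Q_{α,θ}(q_{α,F}, y) dα dθ, where q_{α,F} is the α-quantile of F. In particular, integrating the inner integral over α yields the threshold (Brier-score) decomposition and integrating over θ first yields the quantile decomposition of the CRPS. -/
open MeasureTheory Filter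

section
open intervalIntegral
lemma myIntegralId (a b : ℝ) : ∫ x in a..b, x = (b ^ 2 - a ^ 2) / 2 := integral_id
lemma myIntIntId (a b : ℝ) : IntervalIntegrable (fun x : ℝ => x) MeasureTheory.volume a b :=
  intervalIntegrable_id
end

/-- Double mixture representation of the CRPS: for a CDF `F` with unique quantiles
(`F` strictly increasing and continuous) and quantile function `q` (`F (q α) = α` for
`α ∈ (0,1)`), the CRPS `∫ (F(θ) − 1(θ ≥ y))² dθ` equals
`2∫_ℝ ∫₀¹ S^Q_{α,θ}(q_{α,F}, y) dα dθ`. -/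
theorem stmt19 (F : ℝ → ℝ) (hF_mono : StrictMono F) (hF_cont : Continuous F)
    (hF_bot : Tendsto F atBot (nhds 0)) (hF_top : Tendsto F atTop (nhds 1))
    (q : ℝ → ℝ) (hq : ∀ α ∈ Set.Ioo (0:ℝ) 1, F (q α) = α) (y : ℝ) :
    ∫ θ : ℝ, (F θ - if y ≤ θ then (1:ℝ) else 0) ^ 2
      = 2 * ∫ θ : ℝ, ∫ α in Set.Ioo (0:ℝ) 1, SQ α θ (q α) y := by
  have hFpos : ∀ t, 0 < F t := by
    intro t
    have h0 : (0:ℝ) ≤ F (t - 1) :=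
      le_of_tendsto hF_bot (Filter.eventually_atBot.2 ⟨t - 1, fun s hs => hF_mono.monotone hs⟩)
    exact lt_of_le_of_lt h0 (hF_mono (by linarith))
  have hFlt1 : ∀ t, F t < 1 := by
    intro t
    have h1 : F (t + 1) ≤ 1 :=
      ge_of_tendsto hF_top (Filter.eventually_atTop.2 ⟨t + 1, fun s hs => hF_mono.monotone hs⟩)
    exact lt_of_lt_of_le (hF_mono (by linarith)) h1
  have hiff : ∀ t : ℝ, ∀ α ∈ Set.Ioo (0:ℝ) 1, (t < q α ↔ F t < α) := by
    intro t α hα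
    have h := hq α hα
    constructor
    · intro h'
      rw [← h]
      exact hF_mono h'
    · intro h'
      rw [← h] at h'
      exact hF_mono.lt_iff_lt.1 h'
  have key : ∀ θ : ℝ, (F θ - if y ≤ θ then (1:ℝ) else 0) ^ 2
      = 2 * ∫ α in Set.Ioo (0:ℝ) 1, SQ α θ (q α) y := by
    intro θ
    by_cases hyθ : y ≤ θ
    · -- b = F y ≤ F θ = a, integrand = (1-α) on (a,1)
      have hba : F y ≤ F θ := hF_mono.monotone hyθ
      have hcong : ∫ α in Set.Ioo (0:ℝ) 1, SQ α θ (q α) y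
          = ∫ α in Set.Ioo (0:ℝ) 1,
              Set.indicator (Set.Ioo (F θ) 1) (fun α => 1 - α) α := by
        apply setIntegral_congr_fun measurableSet_Ioo
        intro α hα
        have h1 := hiff y α hα
        have h2 := hiff θ α hα
        simp only [SQ, Set.indicator, Set.mem_Ioo]
        by_cases haα : F θ < α
        · have hbα : F y < α := lt_of_le_of_lt hba haα
          simp [h1.2 hbα, h2.2 haα, haα, hα.2, not_lt.2 hyθ]
        · have hnθ : ¬ θ < q α := fun h => haα (h2.1 h)
          simp [hnθ, haα, not_lt.2 hyθ]
      rw [hcong, setIntegral_indicator measurableSet_Ioo]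
      have hinter : Set.Ioo (0:ℝ) 1 ∩ Set.Ioo (F θ) 1 = Set.Ioo (F θ) 1 := by
        apply Set.inter_eq_self_of_subset_right
        intro x hx
        exact ⟨lt_trans (hFpos θ) hx.1, hx.2⟩
      rw [hinter, ← MeasureTheory.integral_Ioc_eq_integral_Ioo,
        ← intervalIntegral.integral_of_le (le_of_lt (hFlt1 θ))]
      rw [intervalIntegral.integral_sub intervalIntegrable_const (myIntIntId _ _)]
      rw [intervalIntegral.integral_const, (myIntegralId _ _)]
      simp only [smul_eq_mul, if_pos hyθ]
      ring
    · push_neg at hyθ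
      have hab : F θ < F y := hF_mono hyθ
      have hcong : ∫ α in Set.Ioo (0:ℝ) 1, SQ α θ (q α) y
          = ∫ α in Set.Ioo (0:ℝ) 1,
              Set.indicator (Set.Ioc (0:ℝ) (F θ)) (fun α => α) α := by
        apply setIntegral_congr_fun measurableSet_Ioo
        intro α hα
        have h1 := hiff y α hα
        have h2 := hiff θ α hα
        simp only [SQ, Set.indicator, Set.mem_Ioc]
        by_cases haα : F θ < α
        · simp [h2.2 haα, not_le.2 haα, hyθ]
        · have hnθ : ¬ θ < q α := fun h => haα (h2.1 h)
          have hnb : ¬ F y < α := fun h => haα (lt_trans hab h)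
          have hny : ¬ y < q α := fun h => hnb (h1.1 h)
          simp [hnθ, hny, not_lt.1 haα, hα.1, hyθ]
      rw [hcong, setIntegral_indicator measurableSet_Ioc]
      have hinter : Set.Ioo (0:ℝ) 1 ∩ Set.Ioc (0:ℝ) (F θ) = Set.Ioc (0:ℝ) (F θ) := by
        apply Set.inter_eq_self_of_subset_right
        intro x hx
        exact ⟨hx.1, lt_of_le_of_lt hx.2 (hFlt1 θ)⟩
      rw [hinter, ← intervalIntegral.integral_of_le (le_of_lt (hFpos θ))]
      rw [(myIntegralId _ _)]
      simp only [if_neg (not_le.2 hyθ)]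
      ring
  simp_rw [key]
  rw [MeasureTheory.integral_const_mul]
end
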